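/- arXiv:2508.15707 — 3 statements merged into one kernel-verified Lean document; each statement's English description precedes it below -/
import Mathlib

section
/- Let K be a field, A a valuation subring of K, and (Bᵢ)_{i∈I} a nonempty family of valuation subrings of K each containing A. Then the intersection ⋂ᵢ Bᵢ is again a valuation subring of K containing A. -/
/-- The intersection of a nonempty family of valuation subrings of `K`, each containing a
common valuation subring `A`, is again a valuation subring of `K` containing `A`. -/
theorem iInter_valuationSubrings_containing
    (K : Type*) [Field K] (A : ValuationSubring K) {ι : Type*} [Nonempty ι]
    (B : ι → ValuationSubring K) (hB : ∀ i, A ≤ B i) :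
    ∃ C : ValuationSubring K, A ≤ C ∧ (C : Set K) = ⋂ i, (B i : Set K) := by
  have chain : ∀ i j, B i ≤ B j ∨ B j ≤ B i := fun i j =>
    (ValuationSubring.le_total_ideal A).1 ⟨B i, hB i⟩ ⟨B j, hB j⟩
  refine ⟨⟨⨅ i, (B i).toSubring, ?_⟩, fun x hx => ?_, ?_⟩
  · intro x
    by_contra h
    push_neg at h
    obtain ⟨h1, h2⟩ := h
    obtain ⟨i, hi⟩ := not_forall.1 fun h => h1 (Subring.mem_iInf.2 h)
    obtain ⟨j, hj⟩ := not_forall.1 fun h => h2 (Subring.mem_iInf.2 h)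
    rcases chain i j with hij | hij
    · exact hj (hij (((B i).mem_or_inv_mem x).resolve_left hi))
    · exact hi (hij (((B j).mem_or_inv_mem x).resolve_right hj))
  · exact Subring.mem_iInf.2 fun i => hB i hx
  · ext x
    show x ∈ (⨅ i, (B i).toSubring) ↔ _
    simp [Subring.mem_iInf, Set.mem_iInter]
end

section
/- Let X be a spectral space and T ⊆ X a pro-constructible subset. Then the closure of T in X equals the set of all specializations of points of T; in particular, if T is stable under specialization, then T is closed. -/
/-- A spectral space: quasi-compact, T0, sober, with a basis of quasi-compact open sets
stable under finite intersection. -/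
def IsSpectralTopSpace (X : Type*) [TopologicalSpace X] : Prop :=
  CompactSpace X ∧ T0Space X ∧ QuasiSober X ∧
    ∃ B : Set (Set X), (∀ U ∈ B, IsOpen U ∧ IsCompact U) ∧
      (∀ U ∈ B, ∀ V ∈ B, U ∩ V ∈ B) ∧ TopologicalSpace.IsTopologicalBasis B

/-- A constructible subset: a finite union of differences of quasi-compact open sets. -/
def IsConstructibleSet {X : Type*} [TopologicalSpace X] (s : Set X) : Prop :=
  ∃ (n : ℕ) (U V : Fin n → Set X),
    (∀ i, (IsOpen (U i) ∧ IsCompact (U i)) ∧ (IsOpen (V i) ∧ IsCompact (V i))) ∧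
    s = ⋃ i, U i \ V i

/-- A pro-constructible subset: an intersection of constructible subsets. -/
def IsProconstructible {X : Type*} [TopologicalSpace X] (s : Set X) : Prop :=
  ∃ 𝒮 : Set (Set X), (∀ t ∈ 𝒮, IsConstructibleSet t) ∧ s = ⋂₀ 𝒮

/-- Key lemma: for any ultrafilter on a spectral space, there is a point lying in
every constructible set of the ultrafilter and in every quasi-compact open of it. -/
lemma spectral_ultrafilter_point (X : Type*) [TopologicalSpace X]
    (hX : IsSpectralTopSpace X) (f : Ultrafilter X) :
    ∃ x : X, (∀ S : Set X, IsConstructibleSet S → S ∈ f → x ∈ S) ∧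
      (∀ U : Set X, IsOpen U → IsCompact U → U ∈ f → x ∈ U) := by
  obtain ⟨hcomp, ht0, hsober, B, hB1, hB2, hB3⟩ := hX
  haveI := hcomp
  haveI := hsober
  set W : Set X := ⋃₀ {U : Set X | IsOpen U ∧ IsCompact U ∧ U ∉ f} with hW
  set Z : Set X := Wᶜ with hZ
  have hWopen : IsOpen W := isOpen_sUnion (fun U hU => hU.1)
  have hZclosed : IsClosed Z := hWopen.isClosed_compl
  -- claim1
  have claim1 : ∀ V : Set X, IsOpen V → IsCompact V → V ∈ f → (Z ∩ V).Nonempty := by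
    intro V hVo hVc hVf
    by_contra h
    rw [Set.not_nonempty_iff_eq_empty] at h
    have hVW : V ⊆ W := by
      intro z hz
      by_contra hzW
      exact Set.eq_empty_iff_forall_notMem.mp h z ⟨hzW, hz⟩
    -- finite subcover
    obtain ⟨t, hts, htfin, hcov⟩ := hVc.elim_finite_subcover_image
      (ι := Set X) (b := {U : Set X | IsOpen U ∧ IsCompact U ∧ U ∉ f})
      (fun U hU => hU.1) (by rwa [← Set.sUnion_eq_biUnion])
    have hmem : V ∩ ⋂ U ∈ t, Uᶜ ∈ f := by
      refine Filter.inter_mem hVf ?_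
      exact (Filter.biInter_mem htfin).mpr (fun U hU =>
        (Ultrafilter.compl_mem_iff_notMem).mpr (hts hU).2.2)
    have : (V ∩ ⋂ U ∈ t, Uᶜ) = ∅ := by
      rw [Set.eq_empty_iff_forall_notMem]
      rintro z ⟨hzV, hzI⟩
      obtain ⟨U, hUt, hzU⟩ := Set.mem_iUnion₂.mp (hcov hzV)
      exact (Set.mem_iInter₂.mp hzI U hUt) hzU
    rw [this] at hmem
    exact (Filter.empty_notMem (f : Filter X)) hmem
  -- membership in f of quasi-compact opens meeting Z
  have claim2 : ∀ V : Set X, IsOpen V → IsCompact V → (Z ∩ V).Nonempty → V ∈ f := by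
    intro V hVo hVc ⟨z, hzZ, hzV⟩
    by_contra hVf
    exact hzZ (Set.mem_sUnion.mpr ⟨V, ⟨hVo, hVc, hVf⟩, hzV⟩)
  have hZne : Z.Nonempty := by
    have := claim1 Set.univ isOpen_univ isCompact_univ Filter.univ_mem
    simpa using this
  have hZirr : IsIrreducible Z := by
    refine ⟨hZne, fun u v hu hv ⟨a, haZ, hau⟩ ⟨b, hbZ, hbv⟩ => ?_⟩
    obtain ⟨B₁, hB₁, haB₁, hB₁u⟩ := hB3.exists_subset_of_mem_open hau hu
    obtain ⟨B₂, hB₂, hbB₂, hB₂v⟩ := hB3.exists_subset_of_mem_open hbv hv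
    have h1 : B₁ ∈ f := claim2 B₁ (hB1 B₁ hB₁).1 (hB1 B₁ hB₁).2 ⟨a, haZ, haB₁⟩
    have h2 : B₂ ∈ f := claim2 B₂ (hB1 B₂ hB₂).1 (hB1 B₂ hB₂).2 ⟨b, hbZ, hbB₂⟩
    have h12 : B₁ ∩ B₂ ∈ B := hB2 B₁ hB₁ B₂ hB₂
    obtain ⟨c, hcZ, hc12⟩ := claim1 (B₁ ∩ B₂) (hB1 _ h12).1 (hB1 _ h12).2
      (Filter.inter_mem h1 h2)
    exact ⟨c, hcZ, hB₁u hc12.1, hB₂v hc12.2⟩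
  obtain ⟨x, hx⟩ := QuasiSober.sober hZirr hZclosed
  have hxZ : x ∈ Z := hx.mem
  have key_open : ∀ U : Set X, IsOpen U → IsCompact U → U ∈ f → x ∈ U := by
    intro U hUo hUc hUf
    obtain ⟨z, hzZ, hzU⟩ := claim1 U hUo hUc hUf
    rw [← hx.def] at hzZ
    by_contra hxU
    have : closure {x} ⊆ Uᶜ :=
      closure_minimal (Set.singleton_subset_iff.mpr hxU) hUo.isClosed_compl
    exact this hzZ hzU
  refine ⟨x, ?_, key_open⟩
  rintro S ⟨n, U, V, hUV, rfl⟩ hSf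
  rw [← Set.biUnion_univ] at hSf
  obtain ⟨i, -, hif⟩ := (Ultrafilter.finite_biUnion_mem_iff Set.finite_univ).mp hSf
  have hUi : U i ∈ f := Filter.mem_of_superset hif (Set.diff_subset)
  have hVi : V i ∉ f := by
    intro hVif
    have : (U i \ V i) ∩ V i ∈ f := Filter.inter_mem hif hVif
    rw [Set.diff_inter_self] at this
    exact (Filter.empty_notMem (f : Filter X)) this
  have hxU : x ∈ U i := key_open _ (hUV i).1.1 (hUV i).1.2 hUi
  have hxV : x ∉ V i := by
    intro hxVi
    exact hxZ (Set.mem_sUnion.mpr ⟨V i, ⟨(hUV i).2.1, (hUV i).2.2, hVi⟩, hxVi⟩)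
  exact Set.mem_iUnion.mpr ⟨i, hxU, hxV⟩

/-- In a spectral space, the closure of a pro-constructible subset `T` is the set of
specializations of points of `T`; in particular, if `T` is stable under specialization
then `T` is closed. -/
theorem closure_proconstructible_eq_specializations
    (X : Type*) [TopologicalSpace X] (hX : IsSpectralTopSpace X)
    (T : Set X) (hT : IsProconstructible T) :
    closure T = {y : X | ∃ x ∈ T, y ∈ closure {x}} ∧
      ((∀ x ∈ T, ∀ y ∈ closure {x}, y ∈ T) → IsClosed T) := by
  obtain ⟨𝒮, h𝒮, hTeq⟩ := hT
  obtain ⟨B, hB1, -, hB3⟩ := hX.2.2.2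
  have main : closure T = {y : X | ∃ x ∈ T, y ∈ closure {x}} := by
    apply Set.Subset.antisymm
    · intro y hy
      set 𝒜 : Set (Set X) := 𝒮 ∪ {U | U ∈ B ∧ y ∈ U} with h𝒜
      have hFIP : ∀ t : Set (Set X), t ⊆ 𝒜 → t.Finite → (⋂₀ t).Nonempty := by
        intro t ht htfin
        set N : Set X := ⋂₀ {s ∈ t | s ∉ 𝒮} with hN
        have hNopen : IsOpen N := Set.Finite.isOpen_sInter
          (htfin.subset (Set.sep_subset _ _))
          (fun s hs => (hB1 s (((ht hs.1).resolve_left hs.2).1)).1)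
        have hyN : y ∈ N := by
          intro s hs
          exact ((ht hs.1).resolve_left hs.2).2
        obtain ⟨z, hzN, hzT⟩ := mem_closure_iff.mp hy N hNopen hyN
        refine ⟨z, fun s hs => ?_⟩
        by_cases h : s ∈ 𝒮
        · exact Set.mem_sInter.mp (hTeq ▸ hzT) s h
        · exact hzN s ⟨hs, h⟩
      have hne : (Filter.generate 𝒜).NeBot := Filter.generate_neBot_iff.mpr hFIP
      haveI := hne
      set f : Ultrafilter X := Ultrafilter.of (Filter.generate 𝒜) with hfdef
      have hle : (f : Filter X) ≤ Filter.generate 𝒜 := Ultrafilter.of_le _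
      have hmem𝒜 : ∀ s ∈ 𝒜, s ∈ f := fun s hs => hle (Filter.mem_generate_of_mem hs)
      obtain ⟨x, hx1, hx2⟩ := spectral_ultrafilter_point X hX f
      have hxT : x ∈ T := by
        rw [hTeq]
        exact fun S hS => hx1 S (h𝒮 S hS) (hmem𝒜 S (Or.inl hS))
      refine ⟨x, hxT, ?_⟩
      rw [mem_closure_iff]
      intro O hO hyO
      obtain ⟨B₀, hB₀, hyB₀, hB₀O⟩ := hB3.exists_subset_of_mem_open hyO hO
      have : x ∈ B₀ := hx2 B₀ (hB1 B₀ hB₀).1 (hB1 B₀ hB₀).2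
        (hmem𝒜 B₀ (Or.inr ⟨hB₀, hyB₀⟩))
      exact ⟨x, hB₀O this, rfl⟩
    · rintro y ⟨x, hxT, hy⟩
      exact closure_mono (Set.singleton_subset_iff.mpr hxT) hy
  refine ⟨main, fun hstab => ?_⟩
  have : closure T ⊆ T := by
    rw [main]; rintro y ⟨x, hxT, hy⟩; exact hstab x hxT y hy
  exact isClosed_of_closure_subset this
end

section
/- Let f : X → Y be a spectral map between spectral spaces that is specializing, i.e., for every x ∈ X and every specialization y' of f(x) in Y there exists a specialization x' of x in X with f(x') = y'. Then f is a closed map. -/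
open Set TopologicalSpace

/-- In a spectral space, the intersection of two compact open sets is compact. -/
lemma IsSpectralTopSpace.isCompact_inter {Y : Type*} [TopologicalSpace Y]
    (hY : IsSpectralTopSpace Y) {U V : Set Y} (hU : IsOpen U) (hUc : IsCompact U)
    (hV : IsOpen V) (hVc : IsCompact V) : IsCompact (U ∩ V) := by
  obtain ⟨-, -, -, B, hB1, hB2, hB3⟩ := hY
  -- write a compact open set as a finite union of basis elements
  have key : ∀ (W : Set Y), IsOpen W → IsCompact W →
      ∃ s : Set (Set Y), s.Finite ∧ s ⊆ B ∧ W = ⋃₀ s := by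
    intro W hW hWc
    obtain ⟨S, hSB, rfl⟩ := hB3.open_eq_sUnion hW
    rw [sUnion_eq_iUnion] at hWc ⊢
    obtain ⟨t, ht⟩ := hWc.elim_finite_subcover (fun s : S => (s : Set Y))
      (fun s => (hB1 s (hSB s.2)).1) subset_rfl
    refine ⟨(fun s : S => (s : Set Y)) '' t, t.finite_toSet.image _, ?_, ?_⟩
    · rintro _ ⟨s, -, rfl⟩; exact hSB s.2
    · apply subset_antisymm
      · refine ht.trans ?_
        intro y hy
        simp only [mem_iUnion] at hy
        obtain ⟨s, hs, hys⟩ := hy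
        exact ⟨s, ⟨s, hs, rfl⟩, hys⟩
      · rintro y ⟨_, ⟨s, -, rfl⟩, hys⟩
        exact mem_iUnion.2 ⟨s, hys⟩
  obtain ⟨s, hsfin, hsB, rfl⟩ := key U hU hUc
  obtain ⟨t, htfin, htB, rfl⟩ := key V hV hVc
  have : ⋃₀ s ∩ ⋃₀ t = ⋃ p ∈ s ×ˢ t, (p.1 ∩ p.2 : Set Y) := by
    ext y
    simp only [mem_inter_iff, mem_sUnion, mem_iUnion, Set.mem_prod]
    constructor
    · rintro ⟨⟨a, ha, hya⟩, ⟨b, hb, hyb⟩⟩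
      exact ⟨(a, b), ⟨ha, hb⟩, hya, hyb⟩
    · rintro ⟨⟨a, b⟩, ⟨ha, hb⟩, hya, hyb⟩
      exact ⟨⟨a, ha, hya⟩, ⟨b, hb, hyb⟩⟩
  rw [this]
  exact (hsfin.prod htfin).isCompact_biUnion fun p hp =>
    (hB1 _ (hB2 _ (hsB hp.1) _ (htB hp.2))).2

/-- A specializing spectral map between spectral spaces is a closed map. -/
theorem specializing_spectralMap_isClosedMap
    {X Y : Type*} [TopologicalSpace X] [TopologicalSpace Y]
    (hX : IsSpectralTopSpace X) (hY : IsSpectralTopSpace Y)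
    (f : X → Y) (hf : IsSpectralMap f)
    (hspec : ∀ x : X, ∀ y' ∈ closure {f x}, ∃ x' ∈ closure {x}, f x' = y') :
    IsClosedMap f := by
  haveI : CompactSpace Y := hY.1
  haveI : QuasiSober X := hX.2.2.1
  obtain ⟨BY, hBY1, -, hBY3⟩ := hY.2.2.2
  intro C hC
  rw [← isOpen_compl_iff, isOpen_iff_forall_mem_open]
  by_contra h
  push_neg at h
  obtain ⟨y, hy, hy2⟩ := h
  -- `y` is in the closure of `f '' C`: every open set containing `y` meets `f '' C`
  have hmeets : ∀ U : Set Y, IsOpen U → y ∈ U → (f '' C ∩ U).Nonempty := by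
    intro U hU hyU
    by_contra hne
    rw [not_nonempty_iff_eq_empty] at hne
    exact hy2 U (fun z hz hz2 => (Set.eq_empty_iff_forall_notMem.1 hne z ⟨hz2, hz⟩)) hU hyU
  -- the family of preimages of compact open neighborhoods of `y`
  set 𝒱 : Set (Set X) := {V | ∃ U : Set Y, IsOpen U ∧ IsCompact U ∧ y ∈ U ∧ V = f ⁻¹' U}
    with h𝒱
  have hVopen : ∀ V ∈ 𝒱, IsOpen V := by
    rintro _ ⟨U, hU, -, -, rfl⟩; exact hU.preimage hf.continuous
  have hVcomp : ∀ V ∈ 𝒱, IsCompact V := by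
    rintro _ ⟨U, hU, hUc, -, rfl⟩; exact hf.isCompact_preimage_of_isOpen hU hUc
  have hVinter : ∀ V ∈ 𝒱, ∀ W ∈ 𝒱, V ∩ W ∈ 𝒱 := by
    rintro _ ⟨U, hU, hUc, hyU, rfl⟩ _ ⟨U', hU', hUc', hyU', rfl⟩
    exact ⟨U ∩ U', hU.inter hU', hY.isCompact_inter hU hUc hU' hUc', ⟨hyU, hyU'⟩,
      (Set.preimage_inter).symm⟩
  have huniv : Set.univ ∈ 𝒱 :=
    ⟨Set.univ, isOpen_univ, isCompact_univ, trivial, rfl⟩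
  -- the collection for Zorn's lemma
  set S : Set (Set X) := {Z | IsClosed Z ∧ Z ⊆ C ∧ ∀ V ∈ 𝒱, (Z ∩ V).Nonempty} with hS
  have hCS : C ∈ S := by
    refine ⟨hC, le_refl _, ?_⟩
    rintro _ ⟨U, hU, hUc, hyU, rfl⟩
    obtain ⟨_, ⟨x, hx, rfl⟩, hfx⟩ := hmeets U hU hyU
    exact ⟨x, hx, hfx⟩
  -- chains have lower bounds
  have hchain : ∀ c ⊆ S, IsChain (· ⊆ ·) c → c.Nonempty →
      ∃ lb ∈ S, ∀ s ∈ c, lb ⊆ s := by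
    intro c hcS hch ⟨Z₀, hZ₀⟩
    refine ⟨⋂₀ c, ⟨?_, ?_, ?_⟩, fun s hs => sInter_subset_of_mem hs⟩
    · exact isClosed_sInter fun Z hZ => (hcS hZ).1
    · exact (sInter_subset_of_mem hZ₀).trans (hcS hZ₀).2.1
    · intro V hV
      have : (V ∩ ⋂ Z : c, (Z : Set X)).Nonempty := by
        refine (hVcomp V hV).inter_iInter_nonempty _ (fun Z => (hcS Z.2).1) ?_
        intro u
        -- a finite subfamily of a chain has a least element
        have : ∃ Z ∈ c, ∀ W ∈ u, Z ⊆ (W : Set X) := by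
          classical
          induction u using Finset.induction with
          | empty => exact ⟨Z₀, hZ₀, fun W hW => absurd hW (Finset.notMem_empty W)⟩
          | @insert W u hWu ih =>
            obtain ⟨Z, hZc, hZ⟩ := ih
            rcases hch.total hZc W.2 with h | h
            · exact ⟨Z, hZc, fun W' hW' => by
                rcases Finset.mem_insert.1 hW' with rfl | hW'
                exacts [h, hZ W' hW']⟩
            · exact ⟨(W : Set X), W.2, fun W' hW' => by
                rcases Finset.mem_insert.1 hW' with rfl | hW'
                exacts [le_refl _, h.trans (hZ W' hW')]⟩
        obtain ⟨Z, hZc, hZ⟩ := this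
        obtain ⟨x, hx1, hx2⟩ := (hcS hZc).2.2 V hV
        exact ⟨x, hx2, mem_iInter₂.2 fun W hW => hZ W hW hx1⟩
      obtain ⟨x, hx1, hx2⟩ := this
      rw [mem_iInter] at hx2
      exact ⟨x, (by exact fun Z hZ => hx2 ⟨Z, hZ⟩ : x ∈ ⋂₀ c), hx1⟩
  obtain ⟨Z, -, hZS, hZmin⟩ := zorn_superset_nonempty S hchain C hCS
  -- `Z` is irreducible
  have hZne : Z.Nonempty := (hZS.2.2 _ huniv).mono (inter_subset_left)
  have hirr : IsIrreducible Z := by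
    refine ⟨hZne, fun U1 U2 hU1 hU2 h1 h2 => ?_⟩
    by_contra hcon
    rw [not_nonempty_iff_eq_empty] at hcon
    -- Z \ U1 is a proper closed subset, so fails a V₁ ∈ 𝒱; similarly for U2
    have key : ∀ U : Set X, IsOpen U → (Z ∩ U).Nonempty →
        ∃ V ∈ 𝒱, Z ∩ V ⊆ U := by
      intro U hU hZU
      have hsub : Z \ U ⊆ Z := diff_subset
      have hne : Z \ U ≠ Z := by
        intro heq
        obtain ⟨x, hxZ, hxU⟩ := hZU
        rw [← heq] at hxZ
        exact hxZ.2 hxU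
      have : Z \ U ∉ S := fun hmem => hne (le_antisymm hsub (hZmin hmem hsub))
      rw [hS, Set.mem_setOf_eq] at this
      push_neg at this
      obtain ⟨V, hV, hVempty⟩ := this (hZS.1.sdiff hU) (hsub.trans hZS.2.1)
      refine ⟨V, hV, ?_⟩
      intro x ⟨hxZ, hxV⟩
      by_contra hxU
      exact absurd hVempty (Set.nonempty_iff_ne_empty.1 ⟨x, ⟨hxZ, hxU⟩, hxV⟩)
    obtain ⟨V1, hV1, hVs1⟩ := key U1 hU1 h1
    obtain ⟨V2, hV2, hVs2⟩ := key U2 hU2 h2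
    obtain ⟨x, hx1, hx2⟩ := hZS.2.2 _ (hVinter V1 hV1 V2 hV2)
    have : x ∈ Z ∩ (U1 ∩ U2) :=
      ⟨hx1, hVs1 ⟨hx1, hx2.1⟩, hVs2 ⟨hx1, hx2.2⟩⟩
    rw [hcon] at this
    exact this
  -- generic point
  obtain ⟨x, hx⟩ := QuasiSober.sober hirr hZS.1
  -- every compact open neighborhood of y contains f x, hence y ∈ closure {f x}
  have hyclos : y ∈ closure ({f x} : Set Y) := by
    rw [mem_closure_iff]
    intro U hU hyU
    obtain ⟨b, hbB, hyb, hbU⟩ := hBY3.exists_subset_of_mem_open hyU hU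
    have hbV : f ⁻¹' b ∈ 𝒱 := ⟨b, (hBY1 b hbB).1, (hBY1 b hbB).2, hyb, rfl⟩
    -- Z meets f ⁻¹' b, and x is generic in Z, so x ∈ f ⁻¹' b
    have : x ∈ f ⁻¹' b := by
      rw [hx.mem_open_set_iff (hVopen _ hbV)]
      exact (hZS.2.2 _ hbV)
    exact ⟨f x, hbU this, rfl⟩
  obtain ⟨x', hx', hfx'⟩ := hspec x y hyclos
  have hxZ : x ∈ Z := hx.mem
  have hx'Z : x' ∈ Z := by
    rw [← hx.def] at hxZ ⊢
    exact (IsClosed.closure_subset_iff isClosed_closure).2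
      (Set.singleton_subset_iff.2 hxZ) hx'
  exact hy ⟨x', hZS.2.1 hx'Z, hfx'⟩
end
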